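/- Let A = ℚ[a₁, a₂, …] be the polynomial ring in countably many variables, R = A[[q]], and consider in R[[z]] the series F_n(z) = 1 + ∑_{r≥1} a_r q^{nr} z^r for n ≥ 0; each F_n(z) has constant term 1 and hence is invertible in R[[z]]. Then the infinite product ∏_{n≥0} F_n(z)^{−1} converges coefficientwise (in the q-adic topology of R applied to each z-coefficient) to a series ∑_{m≥0} c_m z^m whose coefficients satisfy c₀ = 1 and (1 − q^m) c_m = − ∑_{r=1}^{m} a_r c_{m−r} for every m ≥ 1; since 1 − q^m is invertible in R, this recursion determines the c_m uniquely. Moreover each c_m is weighted homogeneous of degree m in the variables a_r when a_r is assigned degree r. -/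

import Mathlib

/-!
The recursion says that `C(z) = ∑ c_m z^m` solves `C(qz) = F₀(z) C(z)`: comparing coefficients
of `z^m` gives `(q^m - 1) c_m = ∑_{r ≥ 1} a_r c_{m-r}`, so, `1 - q^m` being a unit, a solution is
determined by `c₀`. Since `Fₙ(qz) = Fₙ₊₁(z)`, the partial products `G_N = ∏_{n ≤ N} Fₙ⁻¹` satisfy
`G_N(qz) = F₀(z) G_N(z) F_{N+1}(z)⁻¹`, and `F_{N+1} ≡ 1 mod q^{N+1}`. So `G_N` solves the same
equation over `R ⧸ (q^{N+1})`, and uniqueness there gives `G_N ≡ C mod q^{N+1}`.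
Homogeneity follows from the recursion by induction on `m` and then on the power of `q`.
-/

open PowerSeries

noncomputable section

/-- `A = ℚ[a₁, a₂, …]`: the variable `a_r` (for `r ≥ 1`) is `MvPolynomial.X (r-1)`. -/
abbrev A : Type := MvPolynomial ℕ ℚ

/-- `R = A[[q]]`. -/
abbrev R : Type := PowerSeries A

/-- `a_r = X (r-1) ∈ A`, of weighted degree `r` for the weight `i ↦ i + 1`. -/
def a (r : ℕ) : A := MvPolynomial.X (r - 1)

/-- `F_n(z) = 1 + ∑_{r≥1} a_r q^{nr} z^r ∈ R[[z]]`. -/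
def Fser (n : ℕ) : PowerSeries R :=
  PowerSeries.mk fun r =>
    if r = 0 then 1 else PowerSeries.C (R := A) (a r) * (PowerSeries.X : R) ^ (n * r)

theorem PowerSeries.isUnit_one_sub_X_pow {S : Type*} [CommRing S] {m : ℕ} (hm : 0 < m) :
    IsUnit (1 - X ^ m : S⟦X⟧) := by
  simp [isUnit_iff_constantCoeff, zero_pow hm.ne']

theorem PowerSeries.coeff_mem_of_coeff_one_sub_X_pow_mul_mem {S M : Type*} [Ring S] [SetLike M S]
    [AddSubgroupClass M S] (s : M) {j : ℕ} (hj : 0 < j) {f : S⟦X⟧}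
    (h : ∀ k, coeff k ((1 - X ^ j) * f) ∈ s) (k : ℕ) : coeff k f ∈ s := by
  induction k using Nat.strong_induction_on with
  | _ k ih =>
    have hk : coeff k f = coeff k ((1 - X ^ j) * f) + if j ≤ k then coeff (k - j) f else 0 := by
      rw [sub_mul, one_mul, map_sub, coeff_X_pow_mul', sub_add_cancel]
    rw [hk]
    refine add_mem (h k) ?_
    split_ifs with hjk
    · exact ih (k - j) (by omega)
    · exact zero_mem s

theorem PowerSeries.eq_of_rescale_eq_mul {S : Type*} [CommRing S] {t : S}
    (ht : ∀ m, 0 < m → IsUnit (1 - t ^ m)) {F f g : S⟦X⟧} (hF : constantCoeff F = 1)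
    (hf : rescale t f = F * f) (hg : rescale t g = F * g)
    (h0 : constantCoeff f = constantCoeff g) : f = g := by
  rw [← sub_eq_zero]
  set d := f - g
  have hd : rescale t d = F * d := by rw [map_sub, hf, hg, mul_sub]
  ext m
  induction m using Nat.strong_induction_on with
  | _ m ih =>
    rcases m.eq_zero_or_pos with rfl | hm
    · simp [d, h0]
    have hcoeff := congrArg (coeff m) hd
    rw [coeff_rescale, coeff_mul, Finset.sum_eq_single (0, m)] at hcoeff
    · rw [coeff_zero_eq_constantCoeff_apply, hF, one_mul] at hcoeff
      have : (1 - t ^ m) * coeff m d = 0 := by linear_combination -hcoeff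
      simpa using (ht m hm).mul_right_eq_zero.mp this
    · rintro ⟨i, j⟩ hij hne
      have hj : j < m := by
        rw [Finset.HasAntidiagonal.mem_antidiagonal] at hij
        rcases i.eq_zero_or_pos with rfl | hi
        · exact absurd (by simpa using hij) hne
        · omega
      simp [ih j hj]
    · simp

theorem Finset.mul_map_prod_range {M F : Type*} [CommMonoid M] [FunLike F M M]
    [MonoidHomClass F M M] (σ : F) {f : ℕ → M} (hf : ∀ n, σ (f n) = f (n + 1)) (N : ℕ) :
    f 0 * σ (∏ n ∈ range N, f n) = (∏ n ∈ range N, f n) * f N := by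
  rw [map_prod, ← prod_range_succ, prod_range_succ']
  simp only [hf, mul_comm]

theorem map_eq_mul_of_mul_map_eq {M F : Type*} [CommMonoid M] [FunLike F M M]
    [MonoidHomClass F M M] (σ : F) {u x y : M} (hx : u * σ x = x) (hy : y * x = 1) :
    σ y = u * y :=
  calc σ y = σ y * (y * (u * σ x)) := by rw [hx, hy, mul_one]
    _ = u * y * σ (y * x) := by rw [map_mul]; ac_rfl
    _ = u * y := by rw [hy, map_one, mul_one]

theorem constantCoeff_Fser (n : ℕ) : constantCoeff (Fser n) = 1 := by
  simp [← coeff_zero_eq_constantCoeff_apply, Fser]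

theorem isUnit_Fser (n : ℕ) : IsUnit (Fser n) := by
  simp [isUnit_iff_constantCoeff, constantCoeff_Fser]

theorem rescale_X_Fser (n : ℕ) : rescale (X : R) (Fser n) = Fser (n + 1) := by
  ext r : 1
  rw [coeff_rescale]
  rcases r.eq_zero_or_pos with rfl | hr
  · simp [Fser]
  · simp only [Fser, coeff_mk, if_neg hr.ne']
    rw [add_mul, one_mul, pow_add]
    ring

theorem map_Fser_eq_one (n : ℕ) :
    (Fser n).map (Ideal.Quotient.mk (Ideal.span {(X : R) ^ n})) = 1 := by
  ext r
  rw [coeff_map, coeff_one]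
  rcases r.eq_zero_or_pos with rfl | hr
  · simp [Fser]
  · simp only [Fser, coeff_mk, if_neg hr.ne', Ideal.Quotient.eq_zero_iff_mem,
      Ideal.mem_span_singleton]
    exact (pow_dvd_pow _ (Nat.le_mul_of_pos_right n hr)).mul_left _

theorem coeff_Fser_zero_mul_mk (c : ℕ → R) (m : ℕ) :
    coeff m (Fser 0 * mk c) = c m + ∑ r ∈ Finset.Icc 1 m, C (a r) * c (m - r) := by
  rw [coeff_mul, Finset.Nat.sum_antidiagonal_eq_sum_range_succ
      (fun i j => coeff i (Fser 0) * coeff j (mk c)), Finset.range_eq_Ico,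
    Finset.sum_eq_sum_Ico_succ_bot m.succ_pos, zero_add, Nat.succ_eq_add_one,
    Finset.Ico_add_one_right_eq_Icc]
  simp only [Fser, coeff_mk, if_pos, one_mul, Nat.sub_zero, zero_mul, pow_zero, mul_one]
  congr 1
  refine Finset.sum_congr rfl fun r hr => ?_
  rw [if_neg (Nat.one_le_iff_ne_zero.mp (Finset.mem_Icc.mp hr).1)]

-- Indexed by `r + 1` rather than by `r ∈ [1, m]`, so that termination needs no membership proof.
def cseq : ℕ → R
  | 0 => 1
  | m + 1 =>
    -Ring.inverse (1 - X ^ (m + 1)) * ∑ r ∈ Finset.range (m + 1), C (a (r + 1)) * cseq (m - r)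

theorem cseq_zero : cseq 0 = 1 := by
  rw [cseq]

theorem one_sub_X_pow_mul_cseq {m : ℕ} (hm : 0 < m) :
    (1 - X ^ m) * cseq m = -∑ r ∈ Finset.Icc 1 m, C (a r) * cseq (m - r) := by
  obtain ⟨m, rfl⟩ : ∃ k, m = k + 1 := ⟨m - 1, by omega⟩
  have hreindex := Finset.sum_Ico_add' (fun r => C (a r) * cseq (m + 1 - r)) 0 (m + 1) 1
  rw [zero_add, Finset.Ico_add_one_right_eq_Icc 1 (m + 1), ← Finset.range_eq_Ico] at hreindex
  simp only [Nat.add_sub_add_right] at hreindex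
  rw [cseq, ← mul_assoc, mul_neg, Ring.mul_inverse_cancel _ (isUnit_one_sub_X_pow hm),
    neg_one_mul, hreindex]

theorem rescale_X_mk_of_recursion {c : ℕ → R}
    (hc : ∀ m, 0 < m → (1 - X ^ m) * c m = -∑ r ∈ Finset.Icc 1 m, C (a r) * c (m - r)) :
    rescale X (mk c) = Fser 0 * mk c := by
  ext m : 1
  rw [coeff_rescale, coeff_mk, coeff_Fser_zero_mul_mk]
  rcases m.eq_zero_or_pos with rfl | hm
  · simp
  · linear_combination -hc m hm

theorem rescale_X_mk_cseq : rescale X (mk cseq) = Fser 0 * mk cseq :=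
  rescale_X_mk_of_recursion fun _ => one_sub_X_pow_mul_cseq

theorem eq_cseq_of_recursion {c : ℕ → R} (h0 : c 0 = 1)
    (hc : ∀ m, 0 < m → (1 - X ^ m) * c m = -∑ r ∈ Finset.Icc 1 m, C (a r) * c (m - r)) :
    c = cseq := by
  have h := eq_of_rescale_eq_mul (fun _ => isUnit_one_sub_X_pow) (constantCoeff_Fser 0)
    (rescale_X_mk_of_recursion hc) rescale_X_mk_cseq
    (by simp [← coeff_zero_eq_constantCoeff_apply, h0, cseq_zero])
  funext m
  simpa using congrArg (coeff m) h

theorem isWeightedHomogeneous_a {r : ℕ} (hr : 0 < r) :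
    (a r).IsWeightedHomogeneous (fun i => i + 1) r := by
  simpa [a, Nat.sub_add_cancel hr] using
    MvPolynomial.isWeightedHomogeneous_X ℚ (fun i : ℕ => i + 1) (r - 1)

theorem isWeightedHomogeneous_coeff_cseq (m k : ℕ) :
    (coeff k (cseq m)).IsWeightedHomogeneous (fun i => i + 1) m := by
  induction m using Nat.strong_induction_on generalizing k with
  | _ m ih =>
    rcases m.eq_zero_or_pos with rfl | hm
    · rw [cseq_zero, coeff_one]
      split_ifs
      · exact MvPolynomial.isWeightedHomogeneous_one ℚ _
      · exact MvPolynomial.isWeightedHomogeneous_zero ℚ _ _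
    refine coeff_mem_of_coeff_one_sub_X_pow_mul_mem
      (MvPolynomial.weightedHomogeneousSubmodule ℚ (fun i => i + 1) m) hm (fun j => ?_) k
    rw [one_sub_X_pow_mul_cseq hm, map_neg, map_sum]
    refine neg_mem (Submodule.sum_mem _ fun r hr => ?_)
    obtain ⟨hr1, hrm⟩ := Finset.mem_Icc.mp hr
    have h := (isWeightedHomogeneous_a hr1).mul (ih (m - r) (by omega) j)
    rwa [Nat.add_sub_cancel' hrm, ← coeff_C_mul] at h

theorem map_inverse_prod_Fser (N : ℕ) :
    (Ring.inverse (∏ n ∈ Finset.range (N + 1), Fser n)).map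
        (Ideal.Quotient.mk (Ideal.span {(X : R) ^ (N + 1)})) =
      (mk cseq).map (Ideal.Quotient.mk (Ideal.span {(X : R) ^ (N + 1)})) := by
  set π := Ideal.Quotient.mk (Ideal.span {(X : R) ^ (N + 1)})
  set P := ∏ n ∈ Finset.range (N + 1), Fser n
  have hP : IsUnit P := IsUnit.prod_iff.mpr fun n _ => isUnit_Fser n
  have hGP : Ring.inverse P * P = 1 := Ring.inverse_mul_cancel P hP
  have hPfun : (Fser 0).map π * rescale (π X) (P.map π) = P.map π := by
    rw [rescale_map, ← map_mul, Finset.mul_map_prod_range (rescale X) rescale_X_Fser, map_mul,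
      map_Fser_eq_one, mul_one]
  have hGfun : rescale (π X) ((Ring.inverse P).map π) = (Fser 0).map π * (Ring.inverse P).map π :=
    map_eq_mul_of_mul_map_eq (rescale (π X)) hPfun (by rw [← map_mul, hGP, map_one])
  have hcfun : rescale (π X) ((mk cseq).map π) = (Fser 0).map π * (mk cseq).map π := by
    rw [rescale_map, rescale_X_mk_cseq, map_mul]
  refine eq_of_rescale_eq_mul (fun m hm => ?_) ?_ hGfun hcfun ?_
  · simpa using (isUnit_one_sub_X_pow (S := A) hm).map π
  · rw [← coeff_zero_eq_constantCoeff_apply, coeff_map, coeff_zero_eq_constantCoeff_apply,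
      constantCoeff_Fser, map_one]
  · have hG0 : constantCoeff (Ring.inverse P) = 1 := by
      simpa [P, constantCoeff_Fser] using congrArg constantCoeff hGP
    simp [hG0, ← coeff_zero_eq_constantCoeff_apply, cseq_zero]

theorem coeff_coeff_inverse_prod_Fser {N k : ℕ} (hk : k ≤ N) (m : ℕ) :
    coeff k (coeff m (Ring.inverse (∏ n ∈ Finset.range (N + 1), Fser n))) = coeff k (cseq m) := by
  have h := congrArg (coeff m) (map_inverse_prod_Fser N)
  rw [coeff_map, coeff_map, coeff_mk, Ideal.Quotient.eq, Ideal.mem_span_singleton,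
    X_pow_dvd_iff] at h
  rw [← sub_eq_zero, ← map_sub]
  exact h k (by omega)

theorem infinite_product_inverse_recursion :
    -- each `F_n(z)` (having constant term `1`) is invertible in `R[[z]]`
    (∀ n : ℕ, IsUnit (Fser n)) ∧
    ∃ c : ℕ → R,
      -- coefficientwise convergence of the partial products `∏_{n=0}^{N} F_n(z)⁻¹`
      -- (computed via `Ring.inverse`) to `∑ c_m z^m`
      (∀ m k : ℕ, ∃ N₀ : ℕ, ∀ N : ℕ, N₀ ≤ N →
        PowerSeries.coeff (R := A) k
            (PowerSeries.coeff (R := R) m (Ring.inverse (∏ n ∈ Finset.range (N + 1), Fser n))) =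
          PowerSeries.coeff (R := A) k (c m)) ∧
      c 0 = 1 ∧
      -- the recursion `(1 - q^m) c_m = -∑_{r=1}^{m} a_r c_{m-r}`
      (∀ m : ℕ, 1 ≤ m →
        (1 - (PowerSeries.X : R) ^ m) * c m =
          -∑ r ∈ Finset.Icc 1 m, PowerSeries.C (R := A) (a r) * c (m - r)) ∧
      -- `1 - q^m` is invertible in `R`
      (∀ m : ℕ, 1 ≤ m → IsUnit (1 - (PowerSeries.X : R) ^ m)) ∧
      -- hence the recursion determines the `c_m` uniquely
      (∀ c' : ℕ → R, c' 0 = 1 →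
        (∀ m : ℕ, 1 ≤ m →
          (1 - (PowerSeries.X : R) ^ m) * c' m =
            -∑ r ∈ Finset.Icc 1 m, PowerSeries.C (R := A) (a r) * c' (m - r)) →
        c' = c) ∧
      -- each `c_m` is weighted homogeneous of degree `m` when `a_r` has degree `r`
      (∀ m k : ℕ,
        MvPolynomial.IsWeightedHomogeneous (fun i => i + 1)
          (PowerSeries.coeff (R := A) k (c m)) m) := by
  exact ⟨isUnit_Fser, cseq, fun m k => ⟨k, fun _ hN => coeff_coeff_inverse_prod_Fser hN m⟩,
    cseq_zero, fun _ => one_sub_X_pow_mul_cseq, fun _ => isUnit_one_sub_X_pow,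
    fun _ => eq_cseq_of_recursion, isWeightedHomogeneous_coeff_cseq⟩
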